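/- arXiv:2411.01305 — 5 statements merged into one kernel-verified Lean document; each statement's English description precedes it below -/
import Mathlib

section
/- Let B be a set and let 𝒞 be a finite nonempty family of subsets of B that is closed under pairwise intersection. Suppose a point x lies in every member of 𝒞. Then the alternating sum over all strictly increasing chains C₀ ⊊ C₁ ⊊ … ⊊ C_r of members of 𝒞 (for all r ≥ 0) of (−1)^r equals 1; that is, ∑_{r≥0} ∑_{C₀⊊…⊊C_r, C_i∈𝒞} (−1)^r = 1. -/
open scoped Classical

/-- For a finite nonempty family `𝒞` of subsets of `B` closed under pairwise intersection,
if a point `x` lies in every member of `𝒞`, then the alternating sum over all strictly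
increasing chains `C₀ ⊊ … ⊊ C_r` of members of `𝒞` of `(-1)^r` equals `1`.
Chains are encoded as nonempty subsets of `𝒞` that are totally ordered by inclusion. -/
theorem alternating_chain_sum_eq_one {B : Type*} (𝒞 : Finset (Set B)) (h𝒞 : 𝒞.Nonempty)
    (hclosed : ∀ C ∈ 𝒞, ∀ C' ∈ 𝒞, C ∩ C' ∈ 𝒞) (x : B) (hx : ∀ C ∈ 𝒞, x ∈ C) :
    ∑ T ∈ 𝒞.powerset.filter
        (fun T : Finset (Set B) => T.Nonempty ∧ IsChain (· ⊆ ·) (T : Set (Set B))),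
      (-1 : ℤ) ^ (T.card - 1) = 1 := by
  classical
  set M : Set B := 𝒞.inf' h𝒞 id with hMdef
  have hM𝒞 : M ∈ 𝒞 :=
    Finset.inf'_mem (↑𝒞 : Set (Set B)) (fun a ha b hb => hclosed a ha b hb) 𝒞 h𝒞 id
      (fun i hi => hi)
  have hMle : ∀ C ∈ 𝒞, M ⊆ C := fun C hC => Finset.inf'_le id hC
  set s := 𝒞.powerset.filter
      (fun T : Finset (Set B) => T.Nonempty ∧ IsChain (· ⊆ ·) (T : Set (Set B))) with hs
  have mem_s : ∀ T : Finset (Set B),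
      T ∈ s ↔ T ⊆ 𝒞 ∧ T.Nonempty ∧ IsChain (· ⊆ ·) (T : Set (Set B)) := by
    intro T
    simp [hs, Finset.mem_filter, Finset.mem_powerset, and_assoc]
  have hMs : ({M} : Finset (Set B)) ∈ s := by
    rw [mem_s]
    refine ⟨Finset.singleton_subset_iff.2 hM𝒞, Finset.singleton_nonempty _, ?_⟩
    simp only [Finset.coe_singleton]
    exact Set.subsingleton_singleton.isChain
  rw [← Finset.add_sum_erase _ _ hMs]
  have h0 : ∑ T ∈ s.erase {M}, (-1 : ℤ) ^ (T.card - 1) = 0 := by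
    refine Finset.sum_involution
      (fun T _ => if M ∈ T then T.erase M else insert M T) ?_ ?_ ?_ ?_
    · -- signs cancel
      intro T hT
      obtain ⟨hne, hTs⟩ := Finset.mem_erase.1 hT
      obtain ⟨hTsub, hTne, hchain⟩ := (mem_s T).1 hTs
      by_cases hMT : M ∈ T
      · have hcard : 2 ≤ T.card := by
          obtain ⟨C, hC, hCM⟩ : ∃ C ∈ T, C ≠ M := by
            by_contra h
            push_neg at h
            exact hne (Finset.eq_singleton_iff_unique_mem.2 ⟨hMT, h⟩)
          exact Finset.one_lt_card.2 ⟨C, hC, M, hMT, hCM⟩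
        simp only [hMT, if_true, Finset.card_erase_of_mem hMT]
        obtain ⟨n, hn⟩ : ∃ n, T.card = n + 2 := ⟨T.card - 2, by omega⟩
        rw [hn]
        simp [pow_succ]
      · simp only [hMT, if_false, Finset.card_insert_of_notMem hMT]
        have h1 : 1 ≤ T.card := Finset.card_pos.2 hTne
        obtain ⟨n, hn⟩ : ∃ n, T.card = n + 1 := ⟨T.card - 1, by omega⟩
        rw [hn]
        simp [pow_succ]
    · -- g a ≠ a
      intro T hT _
      by_cases hMT : M ∈ T
      · simp only [hMT, if_true]
        intro h
        exact (Finset.notMem_erase M T) (h.symm ▸ hMT)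
      · simp only [hMT, if_false]
        intro h
        exact hMT (h ▸ Finset.mem_insert_self M T)
    · -- g maps into s.erase {M}
      intro T hT
      obtain ⟨hne, hTs⟩ := Finset.mem_erase.1 hT
      obtain ⟨hTsub, hTne, hchain⟩ := (mem_s T).1 hTs
      by_cases hMT : M ∈ T
      · simp only [hMT, if_true]
        refine Finset.mem_erase.2 ⟨?_, (mem_s _).2 ⟨(Finset.erase_subset _ _).trans hTsub, ?_, ?_⟩⟩
        · intro h
          exact (Finset.notMem_erase M T) (h ▸ Finset.mem_singleton_self M)
        · obtain ⟨C, hC, hCM⟩ : ∃ C ∈ T, C ≠ M := by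
            by_contra h
            push_neg at h
            exact hne (Finset.eq_singleton_iff_unique_mem.2 ⟨hMT, h⟩)
          exact ⟨C, Finset.mem_erase.2 ⟨hCM, hC⟩⟩
        · exact hchain.mono (by simp [Finset.coe_erase, Set.diff_subset])
      · simp only [hMT, if_false]
        refine Finset.mem_erase.2 ⟨?_, (mem_s _).2
          ⟨Finset.insert_subset hM𝒞 hTsub, Finset.insert_nonempty _ _, ?_⟩⟩
        · intro h
          obtain ⟨C, hC⟩ := hTne
          have hCins : C ∈ insert M T := Finset.mem_insert_of_mem hC
          rw [h, Finset.mem_singleton] at hCins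
          exact hMT (hCins ▸ hC)
        · rw [Finset.coe_insert]
          exact hchain.insert (fun C hC _ => Or.inl (hMle C (hTsub hC)))
    · -- involution
      intro T hT
      obtain ⟨hne, hTs⟩ := Finset.mem_erase.1 hT
      obtain ⟨hTsub, hTne, hchain⟩ := (mem_s T).1 hTs
      by_cases hMT : M ∈ T
      · simp [hMT, Finset.notMem_erase, Finset.insert_erase hMT]
      · simp [hMT, Finset.erase_insert hMT]
  rw [h0]
  simp
end

section
/- Let B be a set, 𝒞 a finite family of subsets of B closed under pairwise intersection, and D = ⋃_{C∈𝒞} C. Then the indicator function of D satisfies 𝟙_D = ∑_{r≥0} ∑_{C₀⊊…⊊C_r, C_i∈𝒞} (−1)^r · 𝟙_{C₀}, i.e., for every x ∈ B, 𝟙_D(x) equals the alternating sum over all strictly increasing chains in 𝒞 of (−1)^r times 𝟙_{C₀}(x), where C₀ is the smallest element of the chain. -/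
open scoped Classical

/-!
Fix `x` and let `S` be the members of `𝒞` containing `x`: only chains inside `S` contribute.
`S` is again closed under intersection, so if it is nonempty it has a least element `m = ⋂₀ S`.
Adding or removing `m` is then a sign-reversing bijection on the chains of `S`, so the chains of
`S`, the empty one included, have signed count `0`, i.e. the nonempty ones have signed count `1`.
-/

open Finset

section Chains

variable {α R : Type*} [Ring R] (r : α → α → Prop)

theorem isChain_insert_iff_of_forall_rel {s : Set α} {a : α} (h : ∀ b ∈ s, r a b) :
    IsChain r (insert a s) ↔ IsChain r s :=
  ⟨fun hc => hc.mono (Set.subset_insert a s), fun hc => hc.insert fun b hb _ => Or.inl (h b hb)⟩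

theorem sum_neg_one_pow_card_chains_eq_zero {S : Finset α} {m : α} (hm : m ∈ S)
    (hmin : ∀ C ∈ S, r m C) :
    ∑ T ∈ S.powerset.filter (fun T : Finset α => IsChain r (T : Set α)),
      (-1 : R) ^ T.card = 0 := by
  rw [sum_filter, ← insert_erase hm, sum_powerset_insert (notMem_erase m S), ← sum_add_distrib]
  refine sum_eq_zero fun T hT => ?_
  have hTS : T ⊆ S.erase m := mem_powerset.1 hT
  have hTm : m ∉ T := fun h => notMem_erase m S (hTS h)
  rw [coe_insert, isChain_insert_iff_of_forall_rel r fun C hC => hmin C (mem_of_mem_erase (hTS hC)),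
    card_insert_of_notMem hTm, pow_succ]
  split_ifs <;> simp

theorem sum_neg_one_pow_card_sub_one_nonempty_chains_eq_one {S : Finset α} {m : α} (hm : m ∈ S)
    (hmin : ∀ C ∈ S, r m C) :
    ∑ T ∈ S.powerset.filter (fun T : Finset α => T.Nonempty ∧ IsChain r (T : Set α)),
      (-1 : R) ^ (T.card - 1) = 1 := by
  have hchains : S.powerset.filter (fun T : Finset α => IsChain r (T : Set α)) =
      cons ∅ (S.powerset.filter fun T : Finset α => T.Nonempty ∧ IsChain r (T : Set α))
        (by simp) := by
    ext T
    by_cases hT : T = ∅ <;> simp [hT, nonempty_iff_ne_empty]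
  have hzero := sum_neg_one_pow_card_chains_eq_zero (R := R) r hm hmin
  rw [hchains, sum_cons, card_empty, pow_zero, add_eq_zero_iff_eq_neg'] at hzero
  calc _ = -∑ T ∈ S.powerset.filter
          (fun T : Finset α => T.Nonempty ∧ IsChain r (T : Set α)), (-1 : R) ^ T.card := by
        rw [← sum_neg_distrib]
        refine sum_congr rfl fun T hT => ?_
        rw [← pow_sub_one_mul (mem_filter.1 hT).2.1.card_pos.ne' (-1 : R), mul_neg_one, neg_neg]
    _ = 1 := by rw [hzero, neg_neg]

end Chains

theorem sum_mul_ite_mem_sInter_eq_sum_powerset_filter_mem {B R : Type*} [NonAssocSemiring R]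
    (𝒞 : Finset (Set B)) (p : Finset (Set B) → Prop) [DecidablePred p]
    (f : Finset (Set B) → R) (x : B) :
    ∑ T ∈ 𝒞.powerset.filter p, f T * (if x ∈ ⋂₀ (T : Set (Set B)) then 1 else 0) =
      ∑ T ∈ (𝒞.filter (x ∈ ·)).powerset.filter p, f T := by
  simp only [mul_ite, mul_one, mul_zero]
  rw [← sum_filter, filter_filter]
  refine sum_congr (ext fun T => ?_) fun _ _ => rfl
  simp only [mem_filter, mem_powerset, Set.mem_sInter, mem_coe, subset_iff]
  grind

/-- For a finite family `𝒞` of subsets of `B` closed under pairwise intersection and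
`D = ⋃_{C ∈ 𝒞} C`, the indicator function of `D` equals the alternating sum over all
strictly increasing chains `C₀ ⊊ … ⊊ C_r` in `𝒞` of `(-1)^r · 𝟙_{C₀}`.  Chains are
encoded as nonempty subsets of `𝒞` totally ordered by inclusion; the smallest element
`C₀` of such a chain is its intersection `⋂₀ T`. -/
theorem indicator_union_eq_alternating_chain_sum {B : Type*} (𝒞 : Finset (Set B))
    (hclosed : ∀ C ∈ 𝒞, ∀ C' ∈ 𝒞, C ∩ C' ∈ 𝒞) (x : B) :
    (if x ∈ ⋃ C ∈ 𝒞, C then (1 : ℤ) else 0) =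
    ∑ T ∈ 𝒞.powerset.filter
        (fun T : Finset (Set B) => T.Nonempty ∧ IsChain (· ⊆ ·) (T : Set (Set B))),
      (-1 : ℤ) ^ (T.card - 1) * (if x ∈ ⋂₀ (T : Set (Set B)) then 1 else 0) := by
  rw [sum_mul_ite_mem_sInter_eq_sum_powerset_filter_mem]
  set S := 𝒞.filter (x ∈ ·)
  by_cases hx : x ∈ ⋃ C ∈ 𝒞, C
  · obtain ⟨C, hC, hxC⟩ := Set.mem_iUnion₂.1 hx
    have hS : S.Nonempty := ⟨C, mem_filter.2 ⟨hC, hxC⟩⟩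
    have hSclosed : InfClosed (S : Set (Set B)) := by
      intro C hC C' hC'
      simp only [S, coe_filter, Set.mem_ofPred_eq] at hC hC' ⊢
      exact ⟨hclosed C hC.1 C' hC'.1, hC.2, hC'.2⟩
    have hbot : ⋂₀ (S : Set (Set B)) ∈ S :=
      inf_id_set_eq_sInter S ▸ hSclosed.finsetInf_mem hS fun _ h => h
    rw [if_pos hx, sum_neg_one_pow_card_sub_one_nonempty_chains_eq_one _ hbot
      fun C hC => Set.sInter_subset_of_mem hC]
  · have hS : S = ∅ :=
      filter_eq_empty_iff.2 fun C hC hxC => hx (Set.mem_iUnion₂.2 ⟨C, hC, hxC⟩)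
    rw [if_neg hx, hS]
    simp [filter_singleton]
end

section
/- For integers d ≥ 1, r ≥ 0, n ≥ 0, m ≥ 0, the following binomial identity holds: C(d−1−r, n−m)·C(r−1, m) + C(d−1−r, n−m−1)·C(r−2, m) − C(d−1−r, n−m)·C(r−2, m−1) = C(d−r, n−m)·C(r−2, m). -/
open scoped Classical

/-- The generalized binomial coefficient `C(x, k)` for `x : ℚ` and `k : ℤ`:
`x(x-1)⋯(x-k+1)/k!` when `k ≥ 0`, and `0` when `k < 0`. -/
noncomputable def gchoose (x : ℚ) (k : ℤ) : ℚ :=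
  if 0 ≤ k then (∏ j ∈ Finset.range k.toNat, (x - j)) / (Nat.factorial k.toNat) else 0

/-!
Expand `C(d-r, n-m)` and `C(r-1, m)` by Pascal's rule `C(x+1, k) = C(x, k) + C(x, k-1)`, which
holds for every rational `x` and every integer `k` (at `k ≤ 0` because `C(x, k)` vanishes for
negative `k`); what remains is a ring identity.
-/

lemma gchoose_natCast (x : ℚ) (k : ℕ) : gchoose x k = Ring.choose x k := by
  rw [gchoose, if_pos (Int.natCast_nonneg k), Int.toNat_natCast, Ring.choose_eq_smul,
    ← Polynomial.aeval_eq_smeval, Polynomial.aeval_def, Polynomial.eval₂_eq_eval_map,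
    descPochhammer_map, descPochhammer_eval_eq_prod_range, smul_eq_mul, div_eq_inv_mul]

lemma gchoose_of_neg (x : ℚ) {k : ℤ} (hk : k < 0) : gchoose x k = 0 :=
  if_neg hk.not_ge

lemma gchoose_add_one (x : ℚ) (k : ℤ) :
    gchoose (x + 1) k = gchoose x k + gchoose x (k - 1) := by
  rcases lt_or_ge k 0 with hk | hk
  · rw [gchoose_of_neg _ hk, gchoose_of_neg _ hk, gchoose_of_neg _ (by omega), add_zero]
  obtain ⟨_ | t, rfl⟩ := Int.eq_ofNat_of_zero_le hk
  · rw [gchoose_of_neg _ (by omega : ((0 : ℕ) : ℤ) - 1 < 0), add_zero, gchoose_natCast,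
      gchoose_natCast, Ring.choose_zero_right, Ring.choose_zero_right]
  · rw [Nat.cast_succ, add_sub_cancel_right, ← Nat.cast_succ, gchoose_natCast, gchoose_natCast,
      gchoose_natCast, Ring.choose_succ_succ, add_comm]

theorem binomial_identity_general (d r : ℤ) (n m : ℕ) :
    gchoose ((d : ℚ) - 1 - r) ((n : ℤ) - m) * gchoose ((r : ℚ) - 1) (m : ℤ)
      + gchoose ((d : ℚ) - 1 - r) ((n : ℤ) - m - 1) * gchoose ((r : ℚ) - 2) (m : ℤ)
      - gchoose ((d : ℚ) - 1 - r) ((n : ℤ) - m) * gchoose ((r : ℚ) - 2) ((m : ℤ) - 1)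
    = gchoose ((d : ℚ) - r) ((n : ℤ) - m) * gchoose ((r : ℚ) - 2) (m : ℤ) := by
  rw [show (d : ℚ) - r = (d - 1 - r) + 1 by ring, show (r : ℚ) - 1 = (r - 2) + 1 by ring,
    gchoose_add_one, gchoose_add_one]
  ring

/-- For integers `d ≥ 1`, `r ≥ 0` and naturals `n, m`,
`C(d-1-r, n-m)·C(r-1, m) + C(d-1-r, n-m-1)·C(r-2, m) - C(d-1-r, n-m)·C(r-2, m-1)
  = C(d-r, n-m)·C(r-2, m)`. -/
theorem binomial_identity (d r : ℤ) (n m : ℕ) (hd : 1 ≤ d) (hr : 0 ≤ r) :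
    gchoose ((d : ℚ) - 1 - r) ((n : ℤ) - m) * gchoose ((r : ℚ) - 1) (m : ℤ)
      + gchoose ((d : ℚ) - 1 - r) ((n : ℤ) - m - 1) * gchoose ((r : ℚ) - 2) (m : ℤ)
      - gchoose ((d : ℚ) - 1 - r) ((n : ℤ) - m) * gchoose ((r : ℚ) - 2) ((m : ℤ) - 1)
    = gchoose ((d : ℚ) - r) ((n : ℤ) - m) * gchoose ((r : ℚ) - 2) (m : ℤ) :=
  binomial_identity_general d r n m
end

section
/- In the field of rational functions ℚ(t) (or any field where the expressions make sense), let a₁,…,a_d be nonzero rationals, set T_i to be the i-th elementary symmetric polynomial in (t−1)/(t^{a₁}−1), …, (t−1)/(t^{a_d}−1), S_r the r-th elementary symmetric polynomial in t^{a₁},…,t^{a_d}, and τ = ∏_{i=1}^{d} (t^{a_i}−1)^{−1}. Then for 0 ≤ i ≤ d: T_i = (t−1)^i · τ · ∑_{r=0}^{d−i} (−1)^{d−i−r} C(d−r, d−i−r) S_r. -/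
open scoped Classical

section Aux
open Finset

lemma count_lemma (d m : ℕ) (K : Finset (Fin d)) (hK : K.card ≤ m) :
    ((Finset.powersetCard m (Finset.univ : Finset (Fin d))).filter (fun J => K ⊆ J)).card
      = Nat.choose (d - K.card) (m - K.card) := by
  have : ((Finset.powersetCard m (Finset.univ : Finset (Fin d))).filter (fun J => K ⊆ J)).card
      = (Finset.powersetCard (m - K.card) Kᶜ).card := by
    apply Finset.card_bij (fun J _ => J \ K)
    · intro J hJ
      simp only [mem_filter, Finset.mem_powersetCard] at hJ
      rw [Finset.mem_powersetCard]
      constructor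
      · intro x hx; simp only [Finset.mem_sdiff, Finset.mem_compl] at *; exact hx.2
      · rw [Finset.card_sdiff_of_subset hJ.2, hJ.1.2]
    · intro J hJ J' hJ' h
      simp only [mem_filter] at hJ hJ'
      rw [← Finset.sdiff_union_of_subset hJ.2, ← Finset.sdiff_union_of_subset hJ'.2, h]
    · intro L hL
      rw [Finset.mem_powersetCard] at hL
      refine ⟨L ∪ K, ?_, ?_⟩
      · simp only [mem_filter, Finset.mem_powersetCard]
        have hdisj : Disjoint L K := by
          rw [Finset.disjoint_left]; intro x hx; have := hL.1 hx
          simpa [Finset.mem_compl] using this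
        refine ⟨⟨Finset.subset_univ _, ?_⟩, Finset.subset_union_right⟩
        rw [Finset.card_union_of_disjoint hdisj, hL.2]
        omega
      · rw [Finset.union_sdiff_right]
        exact (Finset.sdiff_eq_self_of_disjoint (by
          rw [Finset.disjoint_left]; intro x hx; have := hL.1 hx
          simpa [Finset.mem_compl] using this)).symm ▸ rfl
  rw [this, Finset.card_powersetCard, Finset.card_compl, Fintype.card_fin]

lemma main_comb (F : Type*) [Field F] (d m : ℕ) (_hm : m ≤ d) (x : Fin d → F) :
    ∑ J ∈ Finset.powersetCard m (Finset.univ : Finset (Fin d)), ∏ j ∈ J, (x j - 1)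
    = ∑ r ∈ Finset.range (m + 1),
        (-1 : F) ^ (m - r) * (Nat.choose (d - r) (m - r) : F) *
          ∑ K ∈ Finset.powersetCard r (Finset.univ : Finset (Fin d)), ∏ j ∈ K, x j := by
  -- expand each product
  have step1 : ∀ J ∈ Finset.powersetCard m (Finset.univ : Finset (Fin d)),
      ∏ j ∈ J, (x j - 1)
        = ∑ K ∈ J.powerset, (∏ j ∈ K, x j) * (-1 : F) ^ (m - K.card) := by
    intro J hJ
    rw [Finset.mem_powersetCard] at hJ
    have : ∀ j ∈ J, x j - 1 = x j + (-1) := by intro j _; ring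
    rw [Finset.prod_congr rfl this, Finset.prod_add]
    refine Finset.sum_congr rfl fun K hK => ?_
    rw [Finset.mem_powerset] at hK
    rw [Finset.prod_const, Finset.card_sdiff_of_subset hK, hJ.2]
  rw [Finset.sum_congr rfl step1]
  -- swap order of summation
  rw [Finset.sum_comm' (s' := fun K => (Finset.powersetCard m (Finset.univ : Finset (Fin d))).filter
        (fun J => K ⊆ J)) (t' := (Finset.univ : Finset (Fin d)).powerset)
      (by intro J K;
          simp only [Finset.mem_filter, Finset.mem_powerset]
          constructor
          · rintro ⟨h1, h2⟩; exact ⟨⟨h1, h2⟩, Finset.subset_univ _⟩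
          · rintro ⟨⟨h1, h2⟩, _⟩; exact ⟨h1, h2⟩)]
  -- inner sums are constant
  have step2 : ∀ K ∈ (Finset.univ : Finset (Fin d)).powerset,
      (∑ _J ∈ (Finset.powersetCard m (Finset.univ : Finset (Fin d))).filter (fun J => K ⊆ J),
        (∏ j ∈ K, x j) * (-1 : F) ^ (m - K.card))
      = (((Finset.powersetCard m (Finset.univ : Finset (Fin d))).filter (fun J => K ⊆ J)).card : F)
          * ((∏ j ∈ K, x j) * (-1 : F) ^ (m - K.card)) := by
    intro K _
    rw [Finset.sum_const, nsmul_eq_mul]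
  rw [Finset.sum_congr rfl step2]
  -- restrict to card ≤ m
  rw [← Finset.sum_filter_of_ne (p := fun K => K.card ≤ m) (by
    intro K _ hne
    by_contra h
    push_neg at h
    apply hne
    have : (Finset.powersetCard m (Finset.univ : Finset (Fin d))).filter (fun J => K ⊆ J) = ∅ := by
      rw [Finset.filter_eq_empty_iff]
      intro J hJ hKJ
      rw [Finset.mem_powersetCard] at hJ
      have := Finset.card_le_card hKJ
      omega
    rw [this]
    simp)]
  -- rewrite counts via count_lemma
  have step3 : ∀ K ∈ ((Finset.univ : Finset (Fin d)).powerset).filter (fun K => K.card ≤ m),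
      (((Finset.powersetCard m (Finset.univ : Finset (Fin d))).filter (fun J => K ⊆ J)).card : F)
          * ((∏ j ∈ K, x j) * (-1 : F) ^ (m - K.card))
      = (-1 : F) ^ (m - K.card) * (Nat.choose (d - K.card) (m - K.card) : F) * ∏ j ∈ K, x j := by
    intro K hK
    rw [Finset.mem_filter] at hK
    rw [count_lemma d m K hK.2]
    ring
  rw [Finset.sum_congr rfl step3]
  -- RHS: fiberwise sum
  have step4 : ∀ r ∈ Finset.range (m + 1),
      (-1 : F) ^ (m - r) * (Nat.choose (d - r) (m - r) : F) *
          ∑ K ∈ Finset.powersetCard r (Finset.univ : Finset (Fin d)), ∏ j ∈ K, x j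
      = ∑ K ∈ ((Finset.univ : Finset (Fin d)).powerset).filter (fun K => K.card = r),
          (-1 : F) ^ (m - K.card) * (Nat.choose (d - K.card) (m - K.card) : F) * ∏ j ∈ K, x j := by
    intro r _
    rw [Finset.mul_sum, ← Finset.powersetCard_eq_filter]
    refine Finset.sum_congr rfl fun K hK => ?_
    rw [Finset.mem_powersetCard] at hK
    rw [hK.2]
  rw [Finset.sum_congr rfl step4, Finset.sum_fiberwise_eq_sum_filter]
  refine (Finset.sum_congr ?_ fun _ _ => rfl)
  ext K
  simp [Nat.lt_succ_iff]
end Aux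

/-- In a field `F` (e.g. `ℚ(t^{1/q})`), let `u j` play the role of `t^{a_j}` with `u j ≠ 1`
(the `a_j` being nonzero rationals), let `T_i` be the `i`-th elementary symmetric polynomial
in `(t-1)/(u 1 - 1), …, (t-1)/(u d - 1)`, `S_r` the `r`-th elementary symmetric polynomial
in `u 1, …, u d`, and `τ = ∏_j (u j - 1)⁻¹`.  Then for `0 ≤ i ≤ d`:
`T_i = (t-1)^i · τ · ∑_{r=0}^{d-i} (-1)^{d-i-r} C(d-r, d-i-r) S_r`. -/
theorem esymm_transform (F : Type*) [Field F] (d : ℕ) (u : Fin d → F) (t : F)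
    (hu : ∀ j, u j ≠ 1) (i : ℕ) (hi : i ≤ d) :
    ∑ I ∈ Finset.powersetCard i (Finset.univ : Finset (Fin d)),
        ∏ j ∈ I, (t - 1) / (u j - 1)
    = (t - 1) ^ i * (∏ j, (u j - 1))⁻¹ *
        ∑ r ∈ Finset.range (d - i + 1),
          (-1 : F) ^ (d - i - r) * (Nat.choose (d - r) (d - i - r) : F) *
            ∑ I ∈ Finset.powersetCard r (Finset.univ : Finset (Fin d)), ∏ j ∈ I, u j := by
  have hne : ∀ j, u j - 1 ≠ 0 := fun j => sub_ne_zero.mpr (hu j)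
  have step1 : ∀ I ∈ Finset.powersetCard i (Finset.univ : Finset (Fin d)),
      ∏ j ∈ I, (t - 1) / (u j - 1)
      = (t - 1) ^ i * (∏ j, (u j - 1))⁻¹ * ∏ j ∈ Finset.univ \ I, (u j - 1) := by
    intro I hI
    rw [Finset.mem_powersetCard] at hI
    have hsplit : (∏ j ∈ Finset.univ \ I, (u j - 1)) * ∏ j ∈ I, (u j - 1)
        = ∏ j, (u j - 1) := Finset.prod_sdiff hI.1
    have hInz : (∏ j ∈ I, (u j - 1)) ≠ 0 := Finset.prod_ne_zero_iff.mpr fun j _ => hne j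
    have hCnz : (∏ j ∈ Finset.univ \ I, (u j - 1)) ≠ 0 :=
      Finset.prod_ne_zero_iff.mpr fun j _ => hne j
    have key : ((∏ j ∈ Finset.univ \ I, (u j - 1)) * ∏ j ∈ I, (u j - 1))⁻¹ *
        (∏ j ∈ Finset.univ \ I, (u j - 1)) = (∏ j ∈ I, (u j - 1))⁻¹ := by
      rw [mul_inv, mul_comm ((∏ j ∈ Finset.univ \ I, (u j - 1))⁻¹), mul_assoc,
        inv_mul_cancel₀ hCnz, mul_one]
    rw [Finset.prod_div_distrib, Finset.prod_const, hI.2, ← hsplit, mul_assoc, key,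
      div_eq_mul_inv]
  rw [Finset.sum_congr rfl step1, ← Finset.mul_sum]
  congr 1
  have step2 : ∑ I ∈ Finset.powersetCard i (Finset.univ : Finset (Fin d)),
      ∏ j ∈ Finset.univ \ I, (u j - 1)
      = ∑ J ∈ Finset.powersetCard (d - i) (Finset.univ : Finset (Fin d)),
          ∏ j ∈ J, (u j - 1) := by
    apply Finset.sum_nbij' (fun I => Finset.univ \ I) (fun J => Finset.univ \ J)
    · intro I hI
      rw [Finset.mem_powersetCard] at hI ⊢
      refine ⟨Finset.subset_univ _, ?_⟩
      rw [Finset.card_sdiff_of_subset hI.1, Finset.card_univ, Fintype.card_fin, hI.2]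
    · intro J hJ
      rw [Finset.mem_powersetCard] at hJ ⊢
      refine ⟨Finset.subset_univ _, ?_⟩
      rw [Finset.card_sdiff_of_subset hJ.1, Finset.card_univ, Fintype.card_fin, hJ.2]
      omega
    · intro I hI; simp
    · intro J hJ; simp
    · intro I hI; rfl
  rw [step2, main_comb F d (d - i) (Nat.sub_le d i) u]
end

section
/- Let A ⊂ ℂ^{n+1} be a central hyperplane arrangement whose smallest edge K = ⋂ᵢ Vᵢ has dimension k ≥ 1. Let M ⊂ ℙⁿ be the complement of the projectivized arrangement ℙ(A), and let M' ⊂ ℙ(ℂ^{n+1}/K) be the complement of the projectivized quotient arrangement. Then in K₀(Var_ℂ), [M] = 𝕃^k · [M'], where 𝕃 = [𝔸¹]. -/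
/-!
Both sides are computed by inclusion–exclusion over the subsets `t` of the hyperplanes:
the complement has class `∑ₜ (-1)^|t| [ℙ(⋂_{i∈t} Vᵢ)]`. Each intersection `⋂_{i∈t} Vᵢ`
contains `K` and is the preimage of the corresponding intersection in `V/K`, so its
dimension is `k` more than that of its image. Since `[ℙ^{k+m-1}] = [ℙ^{k-1}] + 𝕃^k [ℙ^{m-1}]`
and the alternating sum `∑ₜ (-1)^|t|` vanishes for a nonempty arrangement, the `[ℙ^{k-1}]`
terms cancel.
-/

open Finset Module
open scoped LinearAlgebra.Projectivization

theorem apply_inter_biInter_compl_eq_sum_powerset {α ι R : Type*} [Ring R] (μ : Set α → R)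
    (hadd : ∀ A B : Set α, Disjoint A B → μ (A ∪ B) = μ A + μ B)
    (V : ι → Set α) (s : Finset ι) (U : Set α) :
    μ (U ∩ ⋂ i ∈ s, (V i)ᶜ) =
      ∑ t ∈ s.powerset, (-1) ^ #t * μ (U ∩ ⋂ i ∈ t, V i) := by
  classical
  induction s using Finset.induction_on generalizing U with
  | empty => simp
  | @insert a s ha ih =>
    have hdisj :
        Disjoint (U ∩ ⋂ i ∈ insert a s, (V i)ᶜ) (U ∩ V a ∩ ⋂ i ∈ s, (V i)ᶜ) := by
      rw [set_biInter_insert]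
      exact Set.disjoint_left.2 fun p hp hq => hp.2.1 hq.1.2
    have hsplit : μ (U ∩ ⋂ i ∈ s, (V i)ᶜ) =
        μ (U ∩ ⋂ i ∈ insert a s, (V i)ᶜ) + μ (U ∩ V a ∩ ⋂ i ∈ s, (V i)ᶜ) := by
      rw [← hadd _ _ hdisj]
      congr 1
      ext p
      simp only [set_biInter_insert, Set.mem_union, Set.mem_inter_iff, Set.mem_compl_iff]
      tauto
    rw [eq_sub_of_add_eq hsplit.symm, ih, ih, sum_powerset_insert ha, sub_eq_add_neg,
      ← sum_neg_distrib]
    refine congrArg _ (sum_congr rfl fun t ht => ?_)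
    rw [card_insert_of_notMem fun h => ha (mem_powerset.1 ht h), set_biInter_insert,
      Set.inter_assoc, pow_succ, mul_neg_one, neg_mul]

namespace Projectivization

variable {𝕜 W ι : Type*} [DivisionRing 𝕜] [AddCommGroup W] [Module 𝕜 W]

def arrangementComplement (V : ι → Submodule 𝕜 W) : Set (ℙ 𝕜 W) :=
  {p | ∀ i, ¬ p.submodule ≤ V i}

theorem biInter_setOf_submodule_le (V : ι → Submodule 𝕜 W) (t : Finset ι) :
    ⋂ i ∈ t, {p : ℙ 𝕜 W | p.submodule ≤ V i} = {p | p.submodule ≤ t.inf V} := by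
  ext p
  simp [Finset.le_inf_iff]

theorem apply_arrangementComplement_eq_sum_powerset [Fintype ι] {R : Type*} [Ring R] (L : R)
    (μ : Set (ℙ 𝕜 W) → R) (hadd : ∀ A B, Disjoint A B → μ (A ∪ B) = μ A + μ B)
    (hlin : ∀ W' : Submodule 𝕜 W,
      μ {p | p.submodule ≤ W'} = ∑ i ∈ range (finrank 𝕜 W'), L ^ i)
    (V : ι → Submodule 𝕜 W) :
    μ (arrangementComplement V) =
      ∑ t ∈ univ.powerset,
        (-1) ^ #t * ∑ i ∈ range (finrank 𝕜 (t.inf V : Submodule 𝕜 W)), L ^ i := by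
  have h := apply_inter_biInter_compl_eq_sum_powerset μ hadd
    (fun i => {p | p.submodule ≤ V i}) univ Set.univ
  simp only [Set.univ_inter, biInter_setOf_submodule_le, hlin] at h
  convert h
  ext p
  simp [arrangementComplement]

end Projectivization

namespace Submodule

variable {𝕜 W ι : Type*} [DivisionRing 𝕜] [AddCommGroup W] [Module 𝕜 W]

theorem finrank_comap_mkQ [FiniteDimensional 𝕜 W] (K : Submodule 𝕜 W)
    (P : Submodule 𝕜 (W ⧸ K)) :
    finrank 𝕜 (P.comap K.mkQ) = finrank 𝕜 P + finrank 𝕜 K := by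
  have h := LinearMap.finrank_range_add_finrank_ker (K.mkQ ∘ₗ (P.comap K.mkQ).subtype)
  have hK : K ≤ (P.comap K.mkQ) := (ker_mkQ K).symm.trans_le (LinearMap.ker_le_comap K.mkQ)
  rwa [LinearMap.range_comp, range_subtype, map_comap_eq_of_surjective K.mkQ_surjective,
    LinearMap.ker_comp, ker_mkQ, (comapSubtypeEquivOfLe hK).finrank_eq, eq_comm] at h

theorem comap_mkQ_finsetInf_map_mkQ {K : Submodule 𝕜 W} {V : ι → Submodule 𝕜 W}
    (hK : ∀ i, K ≤ V i) (t : Finset ι) :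
    (t.inf fun i => (V i).map K.mkQ).comap K.mkQ = t.inf V := by
  rw [comap_finsetInf]
  exact Finset.inf_congr rfl fun i _ => by rw [comap_map_mkQ, sup_eq_right.2 (hK i)]

end Submodule

theorem geom_sum_add {R : Type*} [Semiring R] (x : R) (k m : ℕ) :
    ∑ i ∈ range (k + m), x ^ i =
      ∑ i ∈ range k, x ^ i + x ^ k * ∑ i ∈ range m, x ^ i := by
  simp only [sum_range_add, mul_sum, pow_add]

theorem complement_class_eq_lk_mul_general (n d k : ℕ) (hd : 1 ≤ d)
    (Vi : Fin d → Submodule ℂ (Fin (n + 1) → ℂ))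
    (K : Submodule ℂ (Fin (n + 1) → ℂ)) (hKdef : K = ⨅ i, Vi i)
    (hK : Module.finrank ℂ K = k)
    (R : Type*) [CommRing R] (L : R)
    (μ : ∀ (W : Type) [AddCommGroup W] [Module ℂ W] [FiniteDimensional ℂ W],
      Set (Projectivization ℂ W) → R)
    (hadd : ∀ (W : Type) [AddCommGroup W] [Module ℂ W] [FiniteDimensional ℂ W]
      (A B : Set (Projectivization ℂ W)), Disjoint A B → μ W (A ∪ B) = μ W A + μ W B)
    (hlin : ∀ (W : Type) [AddCommGroup W] [Module ℂ W] [FiniteDimensional ℂ W]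
      (W' : Submodule ℂ W),
      μ W {p : Projectivization ℂ W | p.submodule ≤ W'} =
        ∑ i ∈ Finset.range (Module.finrank ℂ W'), L ^ i) :
    μ (Fin (n + 1) → ℂ)
        {p : Projectivization ℂ (Fin (n + 1) → ℂ) | ∀ i, ¬ p.submodule ≤ Vi i} =
    L ^ k *
      μ ((Fin (n + 1) → ℂ) ⧸ K)
        {p : Projectivization ℂ ((Fin (n + 1) → ℂ) ⧸ K) |
          ∀ i, ¬ p.submodule ≤ (Vi i).map K.mkQ} := by
  have hKle : ∀ i, K ≤ Vi i := fun i => hKdef ▸ iInf_le Vi i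
  have hrank (t : Finset (Fin d)) : finrank ℂ (t.inf Vi : Submodule ℂ _) =
      k + finrank ℂ (t.inf fun i => (Vi i).map K.mkQ : Submodule ℂ _) := by
    rw [← Submodule.comap_mkQ_finsetInf_map_mkQ hKle, Submodule.finrank_comap_mkQ, hK, add_comm]
  have hsign : ∑ t ∈ (univ : Finset (Fin d)).powerset, (-1 : R) ^ #t = 0 := by
    have h := sum_powerset_neg_one_pow_card_of_nonempty
      (x := (univ : Finset (Fin d))) ⟨⟨0, hd⟩, mem_univ _⟩
    exact_mod_cast congrArg (Int.cast : ℤ → R) h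
  have hterm : ∀ t ∈ (univ : Finset (Fin d)).powerset,
      (-1) ^ #t * ∑ i ∈ range (finrank ℂ (t.inf Vi : Submodule ℂ _)), L ^ i =
        (-1) ^ #t * ∑ i ∈ range k, L ^ i + L ^ k * ((-1) ^ #t *
          ∑ i ∈ range (finrank ℂ (t.inf fun i => (Vi i).map K.mkQ : Submodule ℂ _)), L ^ i) := by
    intro t _
    rw [hrank, geom_sum_add]
    ring
  change μ _ (Projectivization.arrangementComplement Vi) =
    L ^ k * μ _ (Projectivization.arrangementComplement fun i => (Vi i).map K.mkQ)
  rw [Projectivization.apply_arrangementComplement_eq_sum_powerset L _ (hadd _) (hlin _),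
    Projectivization.apply_arrangementComplement_eq_sum_powerset L _ (hadd _) (hlin _),
    sum_congr rfl hterm, sum_add_distrib, ← sum_mul, hsign, zero_mul, zero_add, mul_sum]

/-- Let `A = ⋃ᵢ Vᵢ ⊂ ℂ^{n+1}` be a central hyperplane arrangement whose smallest edge
`K = ⋂ᵢ Vᵢ` has dimension `k ≥ 1`, let `M ⊂ ℙⁿ` be the complement of the projectivized
arrangement and `M' ⊂ ℙ(ℂ^{n+1}/K)` the complement of the projectivized quotient
arrangement.  The identity `[M] = 𝕃^k · [M']` in `K₀(Var_ℂ)` is expressed universally: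
for every commutative ring `R`, `L : R`, and every additive measure `μ` on subsets of
projectivizations of finite-dimensional complex vector spaces that assigns to a
projectivized `m`-dimensional linear subspace the class `1 + L + ⋯ + L^{m-1}` of
`ℙ^{m-1}` (in particular for the Grothendieck class map with `L = 𝕃`), one has
`μ(M) = L^k · μ(M')`. -/
theorem complement_class_eq_lk_mul (n d k : ℕ) (hd : 1 ≤ d) (hk : 1 ≤ k)
    (Vi : Fin d → Submodule ℂ (Fin (n + 1) → ℂ))
    (hVi : ∀ i, Module.finrank ℂ (Vi i) = n)
    (hVinj : Function.Injective Vi)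
    (K : Submodule ℂ (Fin (n + 1) → ℂ)) (hKdef : K = ⨅ i, Vi i)
    (hK : Module.finrank ℂ K = k)
    (R : Type*) [CommRing R] (L : R)
    (μ : ∀ (W : Type) [AddCommGroup W] [Module ℂ W] [FiniteDimensional ℂ W],
      Set (Projectivization ℂ W) → R)
    (h0 : ∀ (W : Type) [AddCommGroup W] [Module ℂ W] [FiniteDimensional ℂ W],
      μ W (∅ : Set (Projectivization ℂ W)) = 0)
    (hadd : ∀ (W : Type) [AddCommGroup W] [Module ℂ W] [FiniteDimensional ℂ W]
      (A B : Set (Projectivization ℂ W)), Disjoint A B → μ W (A ∪ B) = μ W A + μ W B)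
    (hlin : ∀ (W : Type) [AddCommGroup W] [Module ℂ W] [FiniteDimensional ℂ W]
      (W' : Submodule ℂ W),
      μ W {p : Projectivization ℂ W | p.submodule ≤ W'} =
        ∑ i ∈ Finset.range (Module.finrank ℂ W'), L ^ i) :
    μ (Fin (n + 1) → ℂ)
        {p : Projectivization ℂ (Fin (n + 1) → ℂ) | ∀ i, ¬ p.submodule ≤ Vi i} =
    L ^ k *
      μ ((Fin (n + 1) → ℂ) ⧸ K)
        {p : Projectivization ℂ ((Fin (n + 1) → ℂ) ⧸ K) |
          ∀ i, ¬ p.submodule ≤ (Vi i).map K.mkQ} :=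
  complement_class_eq_lk_mul_general n d k hd Vi K hKdef hK R L μ hadd hlin
end
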